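/- The W state is a limit of rank-2 tensors (border rank 2): for t ≠ 0, the tensor T_t = (1/t)·((e₀ + t e₁)⊗(e₀ + t e₁)⊗(e₀ + t e₁) − e₀⊗e₀⊗e₀) has rank ≤ 2 and T_t → |100⟩ + |010⟩ + |001⟩ as t → 0. -/

import Mathlib

/-- A pure (rank-one) tensor `u ⊗ v ⊗ w` in `ℂ² ⊗ ℂ² ⊗ ℂ²`, written as a
hypermatrix. -/
def pureT (u v w : Fin 2 → ℂ) : Fin 2 → Fin 2 → Fin 2 → ℂ :=
  fun i j k => u i * v j * w k

/-- The standard basis vector `e_a` of `ℂ²`. -/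
noncomputable def e (a : Fin 2) : Fin 2 → ℂ := Pi.single a 1

/-- The basis tensor `|abc⟩ = e_a ⊗ e_b ⊗ e_c`. -/
noncomputable def ket (a b c : Fin 2) : Fin 2 → Fin 2 → Fin 2 → ℂ :=
  pureT (e a) (e b) (e c)

/-- The curve of tensors `T_t = (1/t)·((e₀+te₁)⊗(e₀+te₁)⊗(e₀+te₁) − e₀⊗e₀⊗e₀)`. -/
noncomputable def Tcurve (t : ℂ) : Fin 2 → Fin 2 → Fin 2 → ℂ :=
  (1 / t) • (pureT (e 0 + t • e 1) (e 0 + t • e 1) (e 0 + t • e 1) - pureT (e 0) (e 0) (e 0))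


/-!
Expanding the cube trilinearly, `(e₀ + t e₁)^{⊗3} = e₀^{⊗3} + t W + t² W' + t³ |111⟩` with
`W = |100⟩ + |010⟩ + |001⟩` and `W' = |110⟩ + |101⟩ + |011⟩`, so for `t ≠ 0` the curve `T_t`
agrees with the polynomial `W + t W' + t² |111⟩`, which is continuous and equals `W` at `t = 0`.
Rank `≤ 2` is visible from the definition: `T_t` is a multiple of a difference of two pure tensors.
-/
open Filter Topology

lemma smul_pureT_sub_pureT_eq_sum (c : ℂ) (u v w u' v' w' : Fin 2 → ℂ) :
    c • (pureT u v w - pureT u' v' w') =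
      ∑ r, pureT (![c • u, -c • u'] r) (![v, v'] r) (![w, w'] r) := by
  funext i j k
  simp only [pureT, Fin.sum_univ_two, Finset.sum_apply, Pi.smul_apply, Pi.sub_apply,
    Pi.neg_apply, smul_eq_mul, Matrix.cons_val_zero, Matrix.cons_val_one, neg_smul]
  ring

lemma pureT_add_smul_cube (u v : Fin 2 → ℂ) (t : ℂ) :
    pureT (u + t • v) (u + t • v) (u + t • v) =
      pureT u u u + t • (pureT v u u + pureT u v u + pureT u u v)
        + t ^ 2 • (pureT v v u + pureT v u v + pureT u v v) + t ^ 3 • pureT v v v := by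
  funext i j k
  simp only [pureT, Pi.add_apply, Pi.smul_apply, smul_eq_mul]
  ring

lemma Tcurve_eq_of_ne_zero {t : ℂ} (ht : t ≠ 0) :
    Tcurve t = ket 1 0 0 + ket 0 1 0 + ket 0 0 1 + t • (ket 1 1 0 + ket 1 0 1 + ket 0 1 1)
      + t ^ 2 • ket 1 1 1 := by
  rw [Tcurve, pureT_add_smul_cube]
  simp only [ket]
  match_scalars <;> field_simp; ring

lemma tendsto_Tcurve :
    Tendsto Tcurve (𝓝[≠] 0) (𝓝 (ket 1 0 0 + ket 0 1 0 + ket 0 0 1)) := by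
  have hpoly : Continuous fun t : ℂ => ket 1 0 0 + ket 0 1 0 + ket 0 0 1
      + t • (ket 1 1 0 + ket 1 0 1 + ket 0 1 1) + t ^ 2 • ket 1 1 1 := by
    fun_prop
  have hlim := tendsto_nhdsWithin_of_tendsto_nhds (s := {0}ᶜ) (hpoly.tendsto 0)
  simp only [zero_smul, add_zero, ne_eq, OfNat.ofNat_ne_zero, not_false_eq_true,
    zero_pow] at hlim
  refine hlim.congr' ?_
  filter_upwards [self_mem_nhdsWithin] with t ht using (Tcurve_eq_of_ne_zero ht).symm

/-- The W state has border rank 2: for every `t ≠ 0` the tensor `T_t` is a sum of at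
most two pure tensors, and `T_t → |100⟩ + |010⟩ + |001⟩` as `t → 0`. -/
theorem w_state_border_rank_two :
    (∀ t : ℂ, t ≠ 0 → ∃ u v w : Fin 2 → Fin 2 → ℂ,
        Tcurve t = ∑ r, pureT (u r) (v r) (w r)) ∧
    Filter.Tendsto Tcurve (nhdsWithin 0 {0}ᶜ)
      (nhds (ket 1 0 0 + ket 0 1 0 + ket 0 0 1)) :=
  ⟨fun _ _ => ⟨_, _, _, smul_pureT_sub_pureT_eq_sum _ _ _ _ _ _ _⟩, tendsto_Tcurve⟩
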